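/- arXiv:1511.07412 — 3 statements merged into one kernel-verified Lean document; each statement's English description precedes it below -/
import Mathlib

section
/- Let ε > 0 and let x, x', c be positive real numbers. If |log x − log x'| ≤ log(1+ε), then |log(x + c) − log(x' + c)| ≤ log(1+ε). -/
/-- Scalar core of single-hop error preservation (Lemma 1):
if positive reals `x`, `x'` are within a multiplicative factor `1 + ε`
(i.e. their logs differ by at most `log (1+ε)`), then so are `x + c` and `x' + c`
for any positive `c`. -/
theorem stmt_0 (ε x x' c : ℝ) (hε : 0 < ε) (hx : 0 < x) (hx' : 0 < x') (hc : 0 < c)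
    (h : |Real.log x - Real.log x'| ≤ Real.log (1 + ε)) :
    |Real.log (x + c) - Real.log (x' + c)| ≤ Real.log (1 + ε) := by
  have h1ε : (0:ℝ) < 1 + ε := by linarith
  rw [abs_sub_le_iff] at h ⊢
  have key : ∀ a b : ℝ, 0 < a → 0 < b →
      Real.log a - Real.log b ≤ Real.log (1 + ε) →
      Real.log (a + c) - Real.log (b + c) ≤ Real.log (1 + ε) := by
    intro a b ha hb hab
    have hab' : a ≤ (1 + ε) * b := by
      have hlog : Real.log a ≤ Real.log ((1 + ε) * b) := by
        rw [Real.log_mul (ne_of_gt h1ε) (ne_of_gt hb)]; linarith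
      exact (Real.log_le_log_iff ha (by positivity)).mp hlog
    have h2 : a + c ≤ (1 + ε) * (b + c) := by nlinarith
    have := Real.log_le_log (by positivity) h2
    rw [Real.log_mul (ne_of_gt h1ε) (by positivity)] at this
    linarith
  exact ⟨key x x' hx hx' h.1, key x' x hx' hx h.2⟩
end

section
/- Let G = (V,E) be a finite directed graph with |V| = n, let s, t ∈ V with s ≠ t, let λ > 0, and assign to each edge e the pair of weights w_e = (λn+1, 1) if e leaves s and w_e = (1,1) otherwise. Then every simple directed s–t path p satisfies l_1(p) = λn + hop(p) and l_2(p) = hop(p), where hop(p) is the number of edges of p and l_k(p) = Σ_{e∈p} w_{e,k}. Consequently, a simple s–t path p minimizes the cost-to-time ratio l_1(p)/l_2(p) over all simple s–t paths if and only if it maximizes hop(p) over all simple s–t paths. -/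
/-! On a simple `s`–`t` path only the first edge leaves `s`, so `l₁(p) = λn + hop(p)` and
`l₂(p) = hop(p)`. The ratio `l₁/l₂ = 1 + λn / hop(p)` is then strictly decreasing in `hop(p)`,
because `λn > 0`. -/

namespace Stmt5

variable {V : Type*}

/-- The list of edges of a walk, given as the list of its consecutive vertex pairs. -/
def edgesOf (p : List V) : List (V × V) := p.zip p.tail

/-- `p` is a directed walk from `s` to `t` in the digraph with adjacency relation `Adj`:
its vertex list is nonempty, starts at `s`, ends at `t`, and consecutive vertices are
joined by edges. -/
def IsWalk (Adj : V → V → Prop) (s t : V) (p : List V) : Prop :=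
  List.Chain' Adj p ∧ p.head? = some s ∧ p.getLast? = some t

/-- The number of hops (edges) of a walk. -/
def hop (p : List V) : ℕ := (edgesOf p).length

/-- The total weight `Σ_{e ∈ p} w_e` of a walk `p` under edge weights `w`. -/
def lw (w : V → V → ℝ) (p : List V) : ℝ := ((edgesOf p).map fun e => w e.1 e.2).sum

@[simp]
lemma edgesOf_cons_cons (a b : V) (l : List V) :
    edgesOf (a :: b :: l) = (a, b) :: edgesOf (b :: l) := rfl

@[simp]
lemma hop_cons_cons (a b : V) (l : List V) : hop (a :: b :: l) = hop (b :: l) + 1 := by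
  simp [hop]

@[simp]
lemma lw_cons_cons (w : V → V → ℝ) (a b : V) (l : List V) :
    lw w (a :: b :: l) = w a b + lw w (b :: l) := by
  simp [lw]

lemma fst_mem_of_mem_edgesOf {p : List V} {e : V × V} (he : e ∈ edgesOf p) : e.1 ∈ p :=
  (List.of_mem_zip he).1

lemma rel_of_mem_edgesOf {R : V → V → Prop} {p : List V} (hp : p.IsChain R) {e : V × V}
    (he : e ∈ edgesOf p) : R e.1 e.2 := by
  induction p using List.twoStepInduction with
  | nil | singleton => simp [edgesOf] at he
  | cons_cons a b l _ ih =>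
    rw [List.isChain_cons_cons] at hp
    rw [edgesOf_cons_cons, List.mem_cons] at he
    rcases he with rfl | he
    · exact hp.1
    · exact ih b hp.2 he

lemma lw_eq_mul_hop {w : V → V → ℝ} {c : ℝ} {p : List V}
    (hw : ∀ e ∈ edgesOf p, w e.1 e.2 = c) : lw w p = c * hop p := by
  rw [lw, List.map_congr_left hw, List.map_const', List.sum_replicate, nsmul_eq_mul, hop,
    mul_comm]

lemma lw_eq_hop {Adj : V → V → Prop} {w : V → V → ℝ} (hw : ∀ u v, Adj u v → w u v = 1)
    {p : List V} (hp : p.IsChain Adj) : lw w p = hop p := by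
  rw [lw_eq_mul_hop (fun e he => hw _ _ (rel_of_mem_edgesOf hp he)), one_mul]

lemma IsWalk.exists_eq_cons_cons {Adj : V → V → Prop} {s t : V} {p : List V}
    (hp : IsWalk Adj s t p) (hst : s ≠ t) :
    ∃ b l, p = s :: b :: l ∧ Adj s b ∧ (b :: l).IsChain Adj := by
  obtain ⟨hc, hs, ht⟩ := hp
  match p, hs, ht, hc with
  | [_], rfl, ht, _ => exact absurd (Option.some_inj.mp ht) hst
  | _ :: b :: l, rfl, _, hc => exact ⟨b, l, rfl, List.isChain_cons_cons.mp hc⟩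

lemma IsWalk.hop_pos {Adj : V → V → Prop} {s t : V} {p : List V} (hp : IsWalk Adj s t p)
    (hst : s ≠ t) : 0 < hop p := by
  obtain ⟨b, l, rfl, -⟩ := hp.exists_eq_cons_cons hst
  simp

lemma IsWalk.lw_eq_add_hop [DecidableEq V] {Adj : V → V → Prop} {s t : V} {p : List V}
    {w : V → V → ℝ} {C : ℝ} (hw : ∀ u v, Adj u v → w u v = if u = s then C + 1 else 1)
    (hp : IsWalk Adj s t p) (hnd : p.Nodup) (hst : s ≠ t) : lw w p = C + hop p := by
  obtain ⟨b, l, rfl, hsb, hc⟩ := hp.exists_eq_cons_cons hst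
  have hs : s ∉ b :: l := (List.nodup_cons.mp hnd).1
  have hrest : ∀ e ∈ edgesOf (b :: l), w e.1 e.2 = 1 := fun e he => by
    rw [hw _ _ (rel_of_mem_edgesOf hc he), if_neg]
    rintro rfl
    exact hs (fst_mem_of_mem_edgesOf he)
  rw [lw_cons_cons, hw _ _ hsb, if_pos rfl, lw_eq_mul_hop hrest, hop_cons_cons]
  push_cast
  ring

lemma add_div_self_le_add_div_self_iff {K : Type*} [Field K] [LinearOrder K]
    [IsStrictOrderedRing K] {c x y : K} (hc : 0 < c) (hx : 0 < x) (hy : 0 < y) :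
    (c + x) / x ≤ (c + y) / y ↔ y ≤ x := by
  rw [add_div, add_div, div_self hx.ne', div_self hy.ne', add_le_add_iff_right,
    div_le_div_iff_of_pos_left hc hx hy]

/-- Correctness of the reduction from longest simple path to minimum cost-to-time ratio
simple path (Theorem 1): with weights `(λn+1, 1)` on edges leaving `s` and `(1,1)` elsewhere,
every simple `s–t` path `p` has `l₁(p) = λn + hop(p)` and `l₂(p) = hop(p)`; consequently a
simple `s–t` path minimizes the ratio `l₁/l₂` iff it maximizes the number of hops. -/
theorem stmt_5 [Fintype V] [DecidableEq V] (Adj : V → V → Prop) (s t : V) (hst : s ≠ t)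
    (lam : ℝ) (hlam : 0 < lam) (w₁ w₂ : V → V → ℝ)
    (hw₁ : ∀ u v, Adj u v →
      w₁ u v = if u = s then lam * (Fintype.card V : ℝ) + 1 else 1)
    (hw₂ : ∀ u v, Adj u v → w₂ u v = 1) :
    (∀ p : List V, IsWalk Adj s t p → p.Nodup →
      lw w₁ p = lam * (Fintype.card V : ℝ) + (hop p : ℝ) ∧ lw w₂ p = (hop p : ℝ)) ∧
    (∀ p : List V, IsWalk Adj s t p → p.Nodup →
      ((∀ q : List V, IsWalk Adj s t q → q.Nodup →
          lw w₁ p / lw w₂ p ≤ lw w₁ q / lw w₂ q) ↔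
       (∀ q : List V, IsWalk Adj s t q → q.Nodup → hop q ≤ hop p))) := by
  have hC : 0 < lam * (Fintype.card V : ℝ) :=
    mul_pos hlam (Nat.cast_pos.mpr (Fintype.card_pos_iff.mpr ⟨s⟩))
  have hl₁ p (hp : IsWalk Adj s t p) (hnd : p.Nodup) := hp.lw_eq_add_hop hw₁ hnd hst
  have hl₂ p (hp : IsWalk Adj s t p) := lw_eq_hop hw₂ hp.1
  refine ⟨fun p hp hnd => ⟨hl₁ p hp hnd, hl₂ p hp⟩,
    fun p hp hnd => forall₃_congr fun q hq hnd' => ?_⟩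
  have hpos (r : List V) (hr : IsWalk Adj s t r) : (0 : ℝ) < hop r :=
    Nat.cast_pos.mpr (hr.hop_pos hst)
  rw [hl₁ p hp hnd, hl₂ p hp, hl₁ q hq hnd', hl₂ q hq,
    add_div_self_le_add_div_self_iff hC (hpos p hp) (hpos q hq), Nat.cast_le]

end Stmt5
end

section
/- Let Φ(x) = (2π)^{−1/2} ∫_{−∞}^x e^{−t²/2} dt be the standard normal cumulative distribution function, and let D > 0, S > 0. Define C = {(x,y) ∈ ℝ² : x > D, y > S, x − D ≤ 3√y}. Then for all (x₁,y₁), (x₂,y₂) ∈ C, |log Φ((D−x₁)/√y₁) − log Φ((D−x₂)/√y₂)| ≤ 3.284·(3 + D/√S)·(|log x₁ − log x₂| + |log y₁ − log y₂|). -/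
/-!
Write `Φ = (2π)^{-1/2} G` with `G(z) = ∫_{-∞}^z e^{-t²/2} dt`. On `C` the argument
`z = (D - x)/√y` is at least `-3`, and there `(log G)' = e^{-z²/2}/G ≤ 3.284`: the function
`3.284 G(z) - e^{-z²/2}` has derivative `(3.284 + z) e^{-z²/2} ≥ 0`, and it is nonnegative at
`-3` by a Gaussian integration by parts against a well-chosen polynomial. To bound `|z₁ - z₂|`, move first
`y` and then `x`: since `0 ≤ x - D ≤ 3√y`, the first move costs at most `(3/2) |log y₁ - log y₂|`,
and since `x ≤ D + 3√y` and `y > S`, the second costs at most `(3 + D/√S) |log x₁ - log x₂|`.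
-/

open MeasureTheory Real Set Filter Topology Polynomial

namespace Stmt11

noncomputable def Phi (x : ℝ) : ℝ :=
  (2 * Real.pi) ^ (-(1 / 2) : ℝ) * ∫ t in Set.Iic x, Real.exp (-t ^ 2 / 2)

noncomputable def gaussIic (z : ℝ) : ℝ := ∫ t in Iic z, exp (-t ^ 2 / 2)

lemma integrable_pow_mul_exp_neg_sq_div_two (n : ℕ) :
    Integrable fun t : ℝ => t ^ n * exp (-t ^ 2 / 2) := by
  have := integrable_rpow_mul_exp_neg_mul_sq (b := 1 / 2) (by norm_num)
    (s := n) (by linarith [n.cast_nonneg (α := ℝ)])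
  simp only [rpow_natCast] at this
  convert this using 4; ring

lemma integrable_exp_neg_sq_div_two : Integrable fun t : ℝ => exp (-t ^ 2 / 2) := by
  simpa using integrable_pow_mul_exp_neg_sq_div_two 0

lemma tendsto_pow_mul_exp_neg_sq_div_two_atBot (n : ℕ) :
    Tendsto (fun t : ℝ => t ^ n * exp (-t ^ 2 / 2)) atBot (𝓝 0) := by
  have := (tendsto_rpow_abs_mul_exp_neg_mul_sq_cocompact (a := 1 / 2) (by norm_num) n).mono_left
    atBot_le_cocompact
  rw [tendsto_zero_iff_abs_tendsto_zero]
  convert this using 2 with t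
  simp only [Function.comp_apply, abs_mul, abs_pow, abs_of_pos (exp_pos _), rpow_natCast]
  ring_nf

lemma integrable_eval_mul_exp_neg_sq_div_two (p : ℝ[X]) :
    Integrable fun t => p.eval t * exp (-t ^ 2 / 2) := by
  induction p using Polynomial.induction_on' with
  | add p q hp hq => simp only [eval_add, add_mul]; exact hp.add hq
  | monomial n a =>
    simpa only [eval_monomial, mul_assoc] using
      (integrable_pow_mul_exp_neg_sq_div_two n).const_mul a

lemma tendsto_eval_mul_exp_neg_sq_div_two_atBot (p : ℝ[X]) :
    Tendsto (fun t => p.eval t * exp (-t ^ 2 / 2)) atBot (𝓝 0) := by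
  induction p using Polynomial.induction_on' with
  | add p q hp hq => simpa only [eval_add, add_mul, add_zero] using hp.add hq
  | monomial n a =>
    simpa only [eval_monomial, mul_assoc, mul_zero] using
      (tendsto_pow_mul_exp_neg_sq_div_two_atBot n).const_mul a

lemma hasDerivAt_exp_neg_sq_div_two (t : ℝ) :
    HasDerivAt (fun t => exp (-t ^ 2 / 2)) (-t * exp (-t ^ 2 / 2)) t := by
  have h : HasDerivAt (fun t : ℝ => -t ^ 2 / 2) (-t) t :=
    ((hasDerivAt_pow 2 t).fun_neg.div_const 2).congr_deriv (by ring)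
  simpa [mul_comm] using h.exp

lemma integral_Iic_eval_mul_exp_neg_sq_div_two (q : ℝ[X]) (a : ℝ) :
    ∫ t in Iic a, (derivative q - X * q).eval t * exp (-t ^ 2 / 2) =
      q.eval a * exp (-a ^ 2 / 2) := by
  have hderiv (t : ℝ) : HasDerivAt (fun t => q.eval t * exp (-t ^ 2 / 2))
      ((derivative q - X * q).eval t * exp (-t ^ 2 / 2)) t := by
    refine ((q.hasDerivAt t).fun_mul (hasDerivAt_exp_neg_sq_div_two t)).congr_deriv ?_
    simp only [eval_sub, eval_mul, eval_X]; ring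
  rw [integral_Iic_of_hasDerivAt_of_tendsto' (fun t _ => hderiv t)
    (integrable_eval_mul_exp_neg_sq_div_two _).integrableOn
    (tendsto_eval_mul_exp_neg_sq_div_two_atBot q), sub_zero]

lemma gaussIic_pos (z : ℝ) : 0 < gaussIic z := by
  rw [gaussIic, setIntegral_pos_iff_support_of_nonneg_ae
    (Eventually.of_forall fun t => (exp_pos _).le) integrable_exp_neg_sq_div_two.integrableOn]
  simp [Function.support, (exp_pos _).ne', volume_Iic]

lemma hasDerivAt_gaussIic (z : ℝ) : HasDerivAt gaussIic (exp (-z ^ 2 / 2)) z := by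
  have hint := integrable_exp_neg_sq_div_two
  have hsplit : gaussIic = fun w => gaussIic 0 + ∫ t in (0 : ℝ)..w, exp (-t ^ 2 / 2) := by
    ext w
    rw [← intervalIntegral.integral_Iic_sub_Iic hint.integrableOn hint.integrableOn, gaussIic,
      gaussIic, add_sub_cancel]
  rw [hsplit]
  exact ((by fun_prop : Continuous fun t : ℝ => exp (-t ^ 2 / 2)).integral_hasStrictDerivAt
    0 z).hasDerivAt.const_add _

/-- The polynomial `q` is chosen so that `q' - X q = (X + 3)⁶ - 2364`; integrating by parts and
dropping `(t + 3)⁶ ≥ 0` leaves `-2364 G(-3) ≤ q(-3) e^{-9/2} = -720 e^{-9/2}`, and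
`2364 / 720 < 3.284`. -/
lemma mul_exp_neg_nine_div_two_le_gaussIic_neg_three :
    720 * exp (-(9 / 2)) ≤ 2364 * gaussIic (-3) := by
  set q : ℝ[X] := -X ^ 5 - 18 * X ^ 4 - 140 * X ^ 3 - 612 * X ^ 2 - 1635 * X - 2682
  have hpoly (t : ℝ) : (derivative q - X * q).eval t = (t + 3) ^ 6 - 2364 := by
    simp [q]; ring
  have hq : q.eval (-3) = -720 := by norm_num [q]
  have hmono : ∫ t in Iic (-3 : ℝ), -2364 * exp (-t ^ 2 / 2)
      ≤ ∫ t in Iic (-3 : ℝ), (derivative q - X * q).eval t * exp (-t ^ 2 / 2) :=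
    setIntegral_mono (integrable_exp_neg_sq_div_two.const_mul _).integrableOn
      (integrable_eval_mul_exp_neg_sq_div_two _).integrableOn fun t => by
        rw [hpoly]; nlinarith [exp_pos (-t ^ 2 / 2), pow_two_nonneg ((t + 3) ^ 3)]
  rw [integral_Iic_eval_mul_exp_neg_sq_div_two, integral_const_mul, hq] at hmono
  norm_num at hmono
  rw [gaussIic]; linarith

lemma exp_neg_sq_div_two_le_gaussIic {z : ℝ} (hz : -3 ≤ z) :
    exp (-z ^ 2 / 2) ≤ 3.284 * gaussIic z := by
  set h : ℝ → ℝ := fun w => 3.284 * gaussIic w - exp (-w ^ 2 / 2)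
  have hderiv (w : ℝ) : HasDerivAt h ((3.284 + w) * exp (-w ^ 2 / 2)) w :=
    (((hasDerivAt_gaussIic w).const_mul 3.284).sub (hasDerivAt_exp_neg_sq_div_two w)).congr_deriv
      (by ring)
  have hmono : MonotoneOn h (Ici (-3)) := by
    refine monotoneOn_of_hasDerivWithinAt_nonneg (convex_Ici _)
      (fun w _ => (hderiv w).continuousAt.continuousWithinAt)
      (fun w _ => (hderiv w).hasDerivWithinAt)
      fun w hw => ?_
    rw [interior_Ici] at hw
    have : (0 : ℝ) ≤ 3.284 + w := by linarith [hw.out]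
    positivity
  have h₀ : 0 ≤ h (-3) := by
    have := mul_exp_neg_nine_div_two_le_gaussIic_neg_three
    norm_num [h]; linarith [exp_pos (-(9 / 2))]
  have := h₀.trans (hmono self_mem_Ici hz hz)
  simp only [h] at this
  linarith

lemma abs_log_gaussIic_sub_le {z₁ z₂ : ℝ} (h₁ : -3 ≤ z₁) (h₂ : -3 ≤ z₂) :
    |log (gaussIic z₁) - log (gaussIic z₂)| ≤ 3.284 * |z₁ - z₂| := by
  have hderiv (z : ℝ) : HasDerivAt (fun z => log (gaussIic z)) (exp (-z ^ 2 / 2) / gaussIic z) z :=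
    (hasDerivAt_gaussIic z).log (gaussIic_pos z).ne'
  refine (convex_Ici (-3)).norm_image_sub_le_of_norm_hasDerivWithin_le
    (fun z _ => (hderiv z).hasDerivWithinAt) (fun z hz => ?_) h₂ h₁
  rw [norm_of_nonneg (div_pos (exp_pos _) (gaussIic_pos z)).le, div_le_iff₀ (gaussIic_pos z)]
  exact exp_neg_sq_div_two_le_gaussIic hz

lemma log_Phi (z : ℝ) : log (Phi z) = log ((2 * π) ^ (-(1 / 2) : ℝ)) + log (gaussIic z) :=
  log_mul (rpow_pos_of_pos (by positivity) _).ne' (gaussIic_pos z).ne'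

lemma sub_le_mul_log_sub_log {a b : ℝ} (ha : 0 < a) (hab : a ≤ b) :
    b - a ≤ b * (log b - log a) := by
  have hb := ha.trans_le hab
  have := one_sub_inv_le_log_of_pos (div_pos hb ha)
  rw [inv_div, log_div hb.ne' ha.ne'] at this
  calc b - a = b * (1 - a / b) := by field_simp
    _ ≤ b * (log b - log a) := by gcongr

lemma abs_sub_le_max_mul_abs_log_sub {a b : ℝ} (ha : 0 < a) (hb : 0 < b) :
    |a - b| ≤ max a b * |log a - log b| := by
  wlog hab : a ≤ b generalizing a b
  · simpa only [abs_sub_comm, max_comm] using this hb ha (le_of_not_ge hab)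
  rw [abs_sub_comm, abs_of_nonneg (sub_nonneg.2 hab), max_eq_right hab, abs_sub_comm,
    abs_of_nonneg (sub_nonneg.2 (log_le_log ha hab))]
  exact sub_le_mul_log_sub_log ha hab

lemma neg_three_le_div_sqrt {D x y : ℝ} (hy : 0 < y) (hC : x - D ≤ 3 * √y) : -3 ≤ (D - x) / √y := by
  rw [le_div_iff₀ (sqrt_pos.2 hy)]; linarith

lemma abs_div_sqrt_sub_div_sqrt_le {D S x₁ y₁ x₂ y₂ : ℝ} (hD : 0 < D) (hS : 0 < S)
    (hx₁ : D < x₁) (hy₁ : S < y₁) (hC₁ : x₁ - D ≤ 3 * √y₁)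
    (hx₂ : D < x₂) (hy₂ : S < y₂) (hC₂ : x₂ - D ≤ 3 * √y₂) :
    |(D - x₁) / √y₁ - (D - x₂) / √y₂| ≤
      (3 + D / √S) * (|log x₁ - log x₂| + |log y₁ - log y₂|) := by
  wlog hy : y₁ ≤ y₂ generalizing x₁ y₁ x₂ y₂
  · simpa only [abs_sub_comm, add_comm] using this hx₂ hy₂ hC₂ hx₁ hy₁ hC₁ (le_of_not_ge hy)
  have hy₁₀ := hS.trans hy₁
  have hy₂₀ := hS.trans hy₂
  have hs₁ : 0 < √y₁ := sqrt_pos.2 hy₁₀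
  have hs₂ : 0 < √y₂ := sqrt_pos.2 hy₂₀
  have hs : √y₁ ≤ √y₂ := sqrt_le_sqrt hy
  have hsS : √S ≤ √y₂ := sqrt_le_sqrt hy₂.le
  have hlog_sqrt : log √y₂ - log √y₁ = (log y₂ - log y₁) / 2 := by
    rw [log_sqrt hy₁₀.le, log_sqrt hy₂₀.le]; ring
  have hinv : 1 / √y₂ ≤ 1 / √y₁ := by gcongr
  -- pass through the intermediate point `(x₁, y₂)`
  have hy_step : |(D - x₁) / √y₁ - (D - x₁) / √y₂| ≤ 3 / 2 * |log y₁ - log y₂| := by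
    rw [show (D - x₁) / √y₁ - (D - x₁) / √y₂ = -((x₁ - D) * (1 / √y₁ - 1 / √y₂)) by ring,
      abs_neg, abs_of_nonneg (mul_nonneg (by linarith) (sub_nonneg.2 hinv)),
      abs_sub_comm, abs_of_nonneg (sub_nonneg.2 (log_le_log hy₁₀ hy))]
    calc (x₁ - D) * (1 / √y₁ - 1 / √y₂) ≤ 3 * √y₁ * (1 / √y₁ - 1 / √y₂) := by gcongr
      _ = 3 * ((√y₂ - √y₁) / √y₂) := by field_simp
      _ ≤ 3 * (log √y₂ - log √y₁) := by
        gcongr; rw [div_le_iff₀ hs₂, mul_comm]; exact sub_le_mul_log_sub_log hs₁ hs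
      _ = 3 / 2 * (log y₂ - log y₁) := by rw [hlog_sqrt]; ring
  have hx_step : |(D - x₁) / √y₂ - (D - x₂) / √y₂| ≤ (3 + D / √S) * |log x₁ - log x₂| := by
    have hmax : max x₁ x₂ ≤ D + 3 * √y₂ := max_le (by nlinarith) (by linarith)
    have hDs : D / √y₂ ≤ D / √S := div_le_div_of_nonneg_left hD.le (sqrt_pos.2 hS) hsS
    rw [← sub_div, sub_sub_sub_cancel_left, abs_div, abs_of_pos hs₂, abs_sub_comm]
    calc |x₁ - x₂| / √y₂ ≤ max x₁ x₂ * |log x₁ - log x₂| / √y₂ := by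
          gcongr; exact abs_sub_le_max_mul_abs_log_sub (hD.trans hx₁) (hD.trans hx₂)
      _ ≤ (D + 3 * √y₂) * |log x₁ - log x₂| / √y₂ := by gcongr
      _ = (3 + D / √y₂) * |log x₁ - log x₂| := by field_simp; ring
      _ ≤ (3 + D / √S) * |log x₁ - log x₂| := by gcongr
  calc |(D - x₁) / √y₁ - (D - x₂) / √y₂|
      ≤ |(D - x₁) / √y₁ - (D - x₁) / √y₂| + |(D - x₁) / √y₂ - (D - x₂) / √y₂| :=
        abs_sub_le _ _ _
    _ ≤ 3 / 2 * |log y₁ - log y₂| + (3 + D / √S) * |log x₁ - log x₂| := add_le_add hy_step hx_step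
    _ ≤ (3 + D / √S) * (|log x₁ - log x₂| + |log y₁ - log y₂|) := by
        have : 0 ≤ D / √S := by positivity
        nlinarith [abs_nonneg (log y₁ - log y₂)]

/-- Lemma 4: the deadline objective `Φ((D−x)/√y)` is `3.284(3 + D/√S)`-Lipschitz on the
log-log scale with respect to the `L1` norm on the region
`C = {(x,y) : x > D, y > S, x − D ≤ 3√y}`. -/
theorem stmt_11 (D S : ℝ) (hD : 0 < D) (hS : 0 < S) (x₁ y₁ x₂ y₂ : ℝ)
    (hx₁ : D < x₁) (hy₁ : S < y₁) (hC₁ : x₁ - D ≤ 3 * Real.sqrt y₁)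
    (hx₂ : D < x₂) (hy₂ : S < y₂) (hC₂ : x₂ - D ≤ 3 * Real.sqrt y₂) :
    |Real.log (Phi ((D - x₁) / Real.sqrt y₁)) - Real.log (Phi ((D - x₂) / Real.sqrt y₂))| ≤
      3.284 * (3 + D / Real.sqrt S) *
        (|Real.log x₁ - Real.log x₂| + |Real.log y₁ - Real.log y₂|) := by
  rw [log_Phi, log_Phi, add_sub_add_left_eq_sub, mul_assoc]
  calc _ ≤ 3.284 * |(D - x₁) / √y₁ - (D - x₂) / √y₂| :=
        abs_log_gaussIic_sub_le (neg_three_le_div_sqrt (hS.trans hy₁) hC₁)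
          (neg_three_le_div_sqrt (hS.trans hy₂) hC₂)
    _ ≤ _ := by gcongr; exact abs_div_sqrt_sub_div_sqrt_le hD hS hx₁ hy₁ hC₁ hx₂ hy₂ hC₂

end Stmt11
end
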